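/- arXiv:1502.06131 — 5 statements merged into one kernel-verified Lean document; each statement's English description precedes it below -/
import Mathlib

section
/- Every induced subcomplex of a unimodular simplicial complex is unimodular. -/
open Finset

/-- A (finite) simplicial complex on ground set `V`: a collection of finite subsets of `V`
closed under taking subsets.  (The empty collection, the void complex, is allowed.) -/
structure SComplex (V : Type) where
  faces : Finset (Finset V)
  down_closed : ∀ s ∈ faces, ∀ t ⊆ s, t ∈ faces

/-- An integer matrix, viewed over `ℚ`, has a rank. -/
noncomputable def intRank {m n : Type} [Fintype n] (A : Matrix m n ℤ) : ℕ :=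
  (A.map ((↑·) : ℤ → ℚ)).rank

/-- An integer matrix `A` of rank `d` is unimodular if there is a nonzero `λ` such that
every `d × d` minor of `A` equals `0`, `λ` or `-λ`. -/
def IntUnimodular {m n : Type} [Fintype m] [Fintype n] (A : Matrix m n ℤ) : Prop :=
  ∃ lam : ℤ, lam ≠ 0 ∧ ∀ (r : Fin (intRank A) → m) (c : Fin (intRank A) → n),
    (A.submatrix r c).det = 0 ∨ (A.submatrix r c).det = lam ∨ (A.submatrix r c).det = -lam

/-- A real matrix `A` of rank `d` is unimodular if there is a nonzero `λ` such that
every `d × d` minor of `A` equals `0`, `λ` or `-λ`. -/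
def RealUnimodular {m n : Type} [Fintype m] [Fintype n] (A : Matrix m n ℝ) : Prop :=
  ∃ lam : ℝ, lam ≠ 0 ∧ ∀ (r : Fin A.rank → m) (c : Fin A.rank → n),
    (A.submatrix r c).det = 0 ∨ (A.submatrix r c).det = lam ∨ (A.submatrix r c).det = -lam

namespace SComplex

variable {V W : Type}

/-- The facets of a simplicial complex: its inclusion-maximal faces. -/
def facets [DecidableEq V] (C : SComplex V) : Finset (Finset V) :=
  C.faces.filter fun F => ∀ G ∈ C.faces, F ⊆ G → F = G

/-- The design matrix `A_{C,d}` of the hierarchical model given by the complex `C` and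
the table dimension vector `d`.  Columns are indexed by tuples `i ∈ ∏ v, [d v]`, rows by
pairs `(F, j)` with `F` a facet and `j ∈ ∏_{v ∈ F} [d v]`; the entry is `1` iff the
restriction of `i` to `F` is `j`. -/
def designMatrixD [DecidableEq V] (C : SComplex V) (d : V → ℕ) :
    Matrix ((F : {F // F ∈ C.facets}) × ((v : {v // v ∈ F.1}) → Fin (d v.1)))
      ((v : V) → Fin (d v)) ℤ :=
  fun r i => if ∀ v : {v // v ∈ r.1.1}, i v.1 = r.2 v then 1 else 0

/-- The binary design matrix `A_C = A_{C,2}`. -/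
def designMatrix [DecidableEq V] (C : SComplex V) := designMatrixD C fun _ => 2

/-- A simplicial complex is unimodular if its binary design matrix is unimodular. -/
def IsUnimodular [DecidableEq V] [Fintype V] (C : SComplex V) : Prop :=
  IntUnimodular (designMatrix C)

/-- The Alexander dual `C* = {S : Sᶜ ∉ C}`. -/
def dual [DecidableEq V] [Fintype V] (C : SComplex V) : SComplex V where
  faces := univ.filter fun s => sᶜ ∉ C.faces
  down_closed := by
    intro s hs t ht
    simp only [mem_filter, mem_univ, true_and] at hs ⊢
    intro h
    exact hs (C.down_closed _ h _ (compl_subset_compl.mpr ht))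

/-- The induced subcomplex of `C` on a vertex subset `A`. -/
def induce [DecidableEq V] (C : SComplex V) (A : Finset V) :
    SComplex {v // v ∈ A} where
  faces := univ.filter fun s => s.map (Function.Embedding.subtype fun v => v ∈ A) ∈ C.faces
  down_closed := by
    intro s hs t ht
    simp only [mem_filter, mem_univ, true_and] at hs ⊢
    exact C.down_closed _ hs _ (map_subset_map.mpr ht)

/-- The link of a set `S` in `C`, as a complex on the ground set `Sᶜ`:
`link_S(C) = {F \ S : F ∈ C, S ⊆ F}`. -/
def link [DecidableEq V] [Fintype V] (C : SComplex V) (S : Finset V) :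
    SComplex {v // v ∈ Sᶜ} where
  faces := univ.filter fun s =>
    s.map (Function.Embedding.subtype fun v => v ∈ Sᶜ) ∪ S ∈ C.faces
  down_closed := by
    intro s hs t ht
    simp only [mem_filter, mem_univ, true_and] at hs ⊢
    exact C.down_closed _ hs _ (union_subset_union_left (map_subset_map.mpr ht))

/-- The minor `link_R(C \ S)` of `C`, a complex on the ground set `(R ∪ S)ᶜ`. -/
def minorAt [DecidableEq V] [Fintype V] (C : SComplex V) (R S : Finset V) :
    SComplex {v // v ∈ (R ∪ S)ᶜ} where
  faces := univ.filter fun s =>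
    s.map (Function.Embedding.subtype fun v => v ∈ (R ∪ S)ᶜ) ∪ R ∈ C.faces
  down_closed := by
    intro s hs t ht
    simp only [mem_filter, mem_univ, true_and] at hs ⊢
    exact C.down_closed _ hs _ (union_subset_union_left (map_subset_map.mpr ht))

/-- Isomorphism of simplicial complexes: a bijection of ground sets carrying faces to faces. -/
def Isomorphic [DecidableEq W] (C : SComplex V) (D : SComplex W) : Prop :=
  ∃ e : V ≃ W, ∀ s : Finset V, s ∈ C.faces ↔ s.image (⇑e) ∈ D.faces

/-- `D` is a minor of `C` if `D` is isomorphic to `link_R(C \ S)` for some face `R` of `C`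
and vertex set `S` disjoint from `R`. -/
def IsMinor [DecidableEq V] [Fintype V] [DecidableEq W] (D : SComplex W) (C : SComplex V) :
    Prop :=
  ∃ R S : Finset V, Disjoint R S ∧ R ∈ C.faces ∧ D.Isomorphic (C.minorAt R S)

/-- The simplicial complex generated by a given collection of sets. -/
def gen [DecidableEq V] [Fintype V] (gens : Finset (Finset V)) : SComplex V where
  faces := univ.filter fun s => ∃ g ∈ gens, s ⊆ g
  down_closed := by
    intro s hs t ht
    simp only [mem_filter, mem_univ, true_and] at hs ⊢
    obtain ⟨g, hg, hsg⟩ := hs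
    exact ⟨g, hg, ht.trans hsg⟩

/-- The cone over `C`: one new vertex (the last one) is added to every face. -/
def cone {n : ℕ} (C : SComplex (Fin n)) : SComplex (Fin (n + 1)) where
  faces := univ.filter fun s => (univ.filter fun v : Fin n => v.castSucc ∈ s) ∈ C.faces
  down_closed := by
    intro s hs t ht
    simp only [mem_filter, mem_univ, true_and] at hs ⊢
    refine C.down_closed _ hs _ ?_
    intro v hv
    simp only [mem_filter, mem_univ, true_and] at hv ⊢
    exact ht hv

/-- Adding one ghost vertex (the last one) to `C`. -/
def ghost {n : ℕ} (C : SComplex (Fin n)) : SComplex (Fin (n + 1)) where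
  faces := univ.filter fun s => Fin.last n ∉ s ∧
    (univ.filter fun v : Fin n => v.castSucc ∈ s) ∈ C.faces
  down_closed := by
    intro s hs t ht
    simp only [mem_filter, mem_univ, true_and] at hs ⊢
    refine ⟨fun h => hs.1 (ht h), C.down_closed _ hs.2 _ ?_⟩
    intro v hv
    simp only [mem_filter, mem_univ, true_and] at hv ⊢
    exact ht hv

/-- The iterated cone `cone^p(C)`. -/
def conePow {n : ℕ} : (p : ℕ) → SComplex (Fin n) → SComplex (Fin (n + p))
  | 0, C => C
  | p + 1, C => cone (conePow p C)

/-- Adding `p` ghost vertices `G^p(C)`. -/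
def ghostPow {n : ℕ} : (p : ℕ) → SComplex (Fin n) → SComplex (Fin (n + p))
  | 0, C => C
  | p + 1, C => ghost (ghostPow p C)

/-- The embedding `Fin n ↪ Fin (n+1)` by `castSucc`. -/
def castSuccEmb' {n : ℕ} : Fin n ↪ Fin (n + 1) :=
  ⟨Fin.castSucc, Fin.castSucc_injective n⟩

/-- The Lawrence lifting `Λ(C)`: its facets are the old ground set `[n]` (a big facet)
together with `F ∪ {n+1}` for each facet `F` of `C`. -/
def lawrence {n : ℕ} (C : SComplex (Fin n)) : SComplex (Fin (n + 1)) :=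
  gen (insert ((univ : Finset (Fin n)).map castSuccEmb')
    (C.facets.image fun F => insert (Fin.last n) (F.map castSuccEmb')))

/-- The disjoint union `Δ_m ⊔ Δ_k` of an `m`-simplex (on the first `m+1` vertices) and
a `k`-simplex (on the remaining `k+1` vertices). -/
def disjSimplices (m k : ℕ) : SComplex (Fin (m + k + 2)) :=
  gen {univ.filter fun x : Fin (m + k + 2) => (x : ℕ) ≤ m,
    univ.filter fun x : Fin (m + k + 2) => m < (x : ℕ)}

/-- The full simplex on `k` vertices (i.e. `Δ_{k-1}`; for `k = 0` this is `Δ_{-1} = {∅}`). -/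
def fullSimplexC (k : ℕ) : SComplex (Fin k) where
  faces := univ
  down_closed := fun _ _ t _ => mem_univ t

/-- The void complex `Δ_{-2} = {}`. -/
def voidC : SComplex (Fin 0) where
  faces := ∅
  down_closed := by simp

/-- `∂Δ_k ⊔ {v}`: the boundary of a `k`-simplex together with one extra disjoint vertex. -/
def bdyDisjPt (k : ℕ) : SComplex (Fin (k + 2)) where
  faces := univ.filter fun s =>
    s ⊂ (univ.filter fun x : Fin (k + 2) => (x : ℕ) < k + 1) ∨ s = {Fin.last (k + 1)}
  down_closed := by
    intro s hs t ht
    simp only [mem_filter, mem_univ, true_and] at hs ⊢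
    rcases hs with hs | rfl
    · exact Or.inl (lt_of_le_of_lt ht hs)
    · rcases Finset.subset_singleton_iff.mp ht with rfl | rfl
      · refine Or.inl (Finset.empty_ssubset.mpr ⟨⟨0, by omega⟩, ?_⟩)
        simp
      · exact Or.inr rfl

/-- The path `P_4` on four vertices. -/
def P4 : SComplex (Fin 4) := gen {{0, 1}, {1, 2}, {2, 3}}

/-- The four-cycle `C_4`. -/
def C4 : SComplex (Fin 4) := gen {{0, 1}, {1, 2}, {2, 3}, {0, 3}}

/-- The boundary of the octahedron, with antipodal vertex pairs `(0,3)`, `(1,4)`, `(2,5)`. -/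
def O6 : SComplex (Fin 6) :=
  gen {{0, 1, 2}, {0, 1, 5}, {0, 4, 2}, {0, 4, 5}, {3, 1, 2}, {3, 1, 5}, {3, 4, 2}, {3, 4, 5}}

/-- The complex `J_1` on five vertices with facets `12, 15, 234, 345`. -/
def J1 : SComplex (Fin 5) := gen {{0, 1}, {0, 4}, {1, 2, 3}, {2, 3, 4}}

/-- The complex `J_2` on five vertices with facets `12, 235, 34, 145`. -/
def J2 : SComplex (Fin 5) := gen {{0, 1}, {1, 2, 4}, {2, 3}, {0, 3, 4}}

/-- The nuclear complexes (on `Fin` ground sets), built from disjoint unions of two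
simplices, duals thereof, and simplices, by repeatedly coning, adding ghost vertices
and taking Lawrence liftings. -/
inductive Nuclear : {n : ℕ} → SComplex (Fin n) → Prop
  | lawrence {n : ℕ} {D : SComplex (Fin n)} : Nuclear D → Nuclear D.lawrence
  | ghost {n : ℕ} {D : SComplex (Fin n)} : Nuclear D → Nuclear D.ghost
  | coneDisj (p m k : ℕ) : Nuclear (conePow p (disjSimplices m k))
  | coneDualDisj (p m k : ℕ) : Nuclear (conePow p (dual (disjSimplices (m + 1) (k + 1))))
  | simplex (k : ℕ) : Nuclear (fullSimplexC k)
  | void : Nuclear voidC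

/-- A complex on an arbitrary ground set is nuclear if it is isomorphic to a nuclear
complex on a `Fin` ground set. -/
def IsNuclear (C : SComplex V) : Prop :=
  ∃ (k : ℕ) (D : SComplex (Fin k)), Nuclear D ∧ C.Isomorphic D

/-- `C` is β-avoiding if no minor of `C` is isomorphic to `P_4`, `O_6`, `O_6*`, `J_1`,
`J_1*`, `J_2`, or `∂Δ_k ⊔ {v}` for some `k ≥ 1`. -/
def BetaAvoiding [DecidableEq V] [Fintype V] (C : SComplex V) : Prop :=
  ¬ IsMinor P4 C ∧ ¬ IsMinor O6 C ∧ ¬ IsMinor (dual O6) C ∧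
  ¬ IsMinor J1 C ∧ ¬ IsMinor (dual J1) C ∧ ¬ IsMinor J2 C ∧
  ∀ k : ℕ, 1 ≤ k → ¬ IsMinor (bdyDisjPt k) C

/-- The 1-skeleton of a complex, as a simple graph. -/
def oneSkeleton [DecidableEq V] (C : SComplex V) : SimpleGraph V where
  Adj u v := u ≠ v ∧ ({u, v} : Finset V) ∈ C.faces
  symm := by
    constructor
    intro u v h
    exact ⟨h.1.symm, by rw [Finset.pair_comm]; exact h.2⟩
  loopless := by
    constructor
    intro u h
    exact h.1 rfl

/-- The non-ghost vertices of `C`: those `v` with `{v}` a face. -/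
def nonGhost [DecidableEq V] [Fintype V] (C : SComplex V) : Finset V :=
  univ.filter fun v => ({v} : Finset V) ∈ C.faces

/-- `S` is a minimal nonface of `C`: not a face, but all proper subsets are faces. -/
def MinNonface (C : SComplex V) (S : Finset V) : Prop :=
  S ∉ C.faces ∧ ∀ t ⊂ S, t ∈ C.faces

end SComplex

/-!
The rank of `A_C` is the number of faces of `C`. Möbius inversion on the Boolean lattice factors
`A_C` through the faces, and the rows (a facet containing `G`, pattern `1_G`) and columns `1_G`
indexed by the faces `G` form a unitriangular square submatrix when faces are ordered by
inclusion.

The design matrix of `C|_A` is the submatrix of `A_C` on the rows lifted to facets of `C` and the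
columns extended by zero outside `A`. Bordering a maximal minor of it by the face rows and columns
of the faces `G ⊄ A` gives a maximal minor of `A_C` that is block triangular, since the row of
such a `G` vanishes on every column supported in `A`; its determinant is unchanged, so it lies in
`{0, ±λ}`.
-/

namespace Matrix

variable {ι R : Type*} [Fintype ι] [DecidableEq ι] [PartialOrder ι] [CommRing R]

theorem det_eq_prod_diag_of_ne_zero_le {M : Matrix ι ι R} (h : ∀ i j, M i j ≠ 0 → i ≤ j) :
    M.det = ∏ i, M i i := by
  let _ : Fintype (LinearExtension ι) := ‹Fintype ι›
  let e : LinearExtension ι ≃ ι := Equiv.refl _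
  have hupper : (M.submatrix e e).IsUpperTriangular := fun i j hji => by
    by_contra hne
    exact (toLinearExtension.monotone (h _ _ hne)).not_gt hji
  rw [← Matrix.det_submatrix_equiv_self e M, Matrix.det_of_isUpperTriangular hupper]
  rfl

end Matrix

theorem Finset.sum_Icc_neg_one_pow_card_sdiff {α : Type*} [DecidableEq α] (s t : Finset α) :
    ∑ u ∈ Icc s t, (-1 : ℤ) ^ #(u \ s) = if s = t then 1 else 0 := by
  by_cases hst : s ⊆ t
  · have hdisj : ∀ u ∈ (t \ s).powerset, Disjoint s u := fun u hu =>
      disjoint_of_subset_right (mem_powerset.1 hu) disjoint_sdiff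
    have hinj : Set.InjOn (s ∪ ·) ((t \ s).powerset : Set (Finset α)) := fun u hu v hv huv => by
      rw [← union_sdiff_cancel_left (hdisj u hu), ← union_sdiff_cancel_left (hdisj v hv)]
      exact congrArg (· \ s) huv
    rw [Icc_eq_image_powerset hst, sum_image hinj,
      sum_congr rfl fun u hu => by rw [union_sdiff_cancel_left (hdisj u hu)],
      sum_powerset_neg_one_pow_card]
    exact if_congr (sdiff_eq_empty_iff_subset.trans ⟨hst.antisymm, fun h => h ▸ subset_rfl⟩)
      rfl rfl
  · rw [Icc_eq_empty (fun h => hst h), sum_empty, if_neg (fun h => hst h.le)]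

section intRank

variable {m n k ι : Type} [Fintype n]

theorem intRank_mul_le_card [Fintype k] (P : Matrix m k ℤ) (Q : Matrix k n ℤ) :
    intRank (P * Q) ≤ Fintype.card k := by
  change ((P * Q).map (Int.castRingHom ℚ)).rank ≤ _
  rw [Matrix.map_mul]
  exact (Matrix.rank_mul_le_right _ _).trans (Matrix.rank_le_card_height _)

theorem card_le_intRank_of_det_ne_zero [Fintype ι] [DecidableEq ι] (A : Matrix m n ℤ)
    (ρ : ι → m) (κ : ι → n) (h : (A.submatrix ρ κ).det ≠ 0) :
    Fintype.card ι ≤ intRank A := by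
  have hunit : IsUnit ((A.map ((↑·) : ℤ → ℚ)).submatrix ρ κ) := by
    rw [Matrix.isUnit_iff_isUnit_det, Matrix.submatrix_map, ← Int.cast_det, isUnit_iff_ne_zero]
    exact_mod_cast h
  calc Fintype.card ι = _ := (Matrix.rank_of_isUnit _ hunit).symm
    _ ≤ intRank A := Matrix.rank_submatrix_le _ ρ κ

theorem IntUnimodular.submatrix_of_zero_block {m' n' : Type} [Fintype m] [Fintype m']
    [Fintype n'] [Fintype ι] [DecidableEq ι] {M : Matrix m n ℤ} (hM : IntUnimodular M)
    (f : m' → m) (g : n' → n) (ρ : ι → m) (κ : ι → n)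
    (hrank : intRank (M.submatrix f g) + Fintype.card ι = intRank M)
    (hzero : ∀ a j, M (ρ a) (g j) = 0) (hdet : (M.submatrix ρ κ).det = 1) :
    IntUnimodular (M.submatrix f g) := by
  obtain ⟨lam, hlam0, hlam⟩ := hM
  refine ⟨lam, hlam0, fun r c => ?_⟩
  let e : Fin (intRank M) ≃ Fin (intRank (M.submatrix f g)) ⊕ ι :=
    (Fintype.equivFinOfCardEq (by simp [hrank])).symm
  have hblock : M.submatrix (Sum.elim (f ∘ r) ρ) (Sum.elim (g ∘ c) κ) = Matrix.fromBlocks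
      ((M.submatrix f g).submatrix r c) (M.submatrix (f ∘ r) κ) 0 (M.submatrix ρ κ) := by
    ext (i | i) (j | j) <;> simp [hzero]
  have hminor := hlam (Sum.elim (f ∘ r) ρ ∘ e) (Sum.elim (g ∘ c) κ ∘ e)
  rwa [← Matrix.submatrix_submatrix, Matrix.det_submatrix_equiv_self, hblock,
    Matrix.det_fromBlocks_zero₂₁, hdet, mul_one] at hminor

end intRank

namespace SComplex

section BinaryTuples

variable {α : Type}

def binaryIndicator [DecidableEq α] (S : Finset α) : α → Fin 2 :=
  fun v => if v ∈ S then 1 else 0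

def binarySupport [Fintype α] (i : α → Fin 2) : Finset α := univ.filter (i · = 1)

@[simp]
lemma binaryIndicator_eq_one_iff [DecidableEq α] {S : Finset α} {v : α} :
    binaryIndicator S v = 1 ↔ v ∈ S := by
  unfold binaryIndicator
  split_ifs with h <;> simp [h]

@[simp]
lemma mem_binarySupport [Fintype α] {i : α → Fin 2} {v : α} :
    v ∈ binarySupport i ↔ i v = 1 := by
  simp [binarySupport]

@[simp]
lemma binarySupport_binaryIndicator [DecidableEq α] [Fintype α] (S : Finset α) :
    binarySupport (binaryIndicator S) = S := by
  ext v
  simp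

end BinaryTuples

variable {V : Type} [DecidableEq V] (C : SComplex V)

abbrev DesignRow : Type := (F : C.facets) × (F.1 → Fin 2)

lemma mem_facets_iff_maximal {F : Finset V} : F ∈ C.facets ↔ Maximal (· ∈ C.faces) F := by
  simp [facets, maximal_iff]

variable {C}

lemma mem_faces_of_mem_facets {F : Finset V} (hF : F ∈ C.facets) : F ∈ C.faces :=
  ((C.mem_facets_iff_maximal).1 hF).prop

lemma exists_mem_facets_superset {G : Finset V} (hG : G ∈ C.faces) :
    ∃ F ∈ C.facets, G ⊆ F := by
  obtain ⟨F, hGF, hF⟩ := C.faces.exists_le_maximal hG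
  exact ⟨F, (C.mem_facets_iff_maximal).2 hF, hGF⟩

noncomputable def facetAt {G : Finset V} (hG : G ∈ C.faces) : C.facets :=
  ⟨_, (exists_mem_facets_superset hG).choose_spec.1⟩

lemma subset_facetAt {G : Finset V} (hG : G ∈ C.faces) : G ⊆ (facetAt hG).1 :=
  (exists_mem_facets_superset hG).choose_spec.2

def rowSupport (r : C.DesignRow) : Finset V := (binarySupport r.2).map (.subtype _)

lemma mem_rowSupport {r : C.DesignRow} {x : V} :
    x ∈ rowSupport r ↔ ∃ h : x ∈ r.1.1, r.2 ⟨x, h⟩ = 1 := by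
  simp [rowSupport]

lemma rowSupport_subset (r : C.DesignRow) : rowSupport r ⊆ r.1.1 :=
  fun _ hx => (mem_rowSupport.1 hx).1

def rowOf (F : C.facets) (S : Finset V) : C.DesignRow := ⟨F, fun v => binaryIndicator S v.1⟩

lemma rowSupport_rowOf (F : C.facets) (S : Finset V) : rowSupport (rowOf F S) = F.1 ∩ S := by
  ext x
  simp [mem_rowSupport, rowOf]

section

variable [Fintype V]

lemma designMatrix_apply_eq_ite (r : C.DesignRow) (i : V → Fin 2) :
    designMatrix C r i = if r.1.1 ∩ binarySupport i = rowSupport r then 1 else 0 := by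
  have fin_two_eq_iff : ∀ a b : Fin 2, a = b ↔ (a = 1 ↔ b = 1) := by decide
  refine if_congr ?_ rfl rfl
  simp only [Finset.ext_iff, mem_inter, mem_binarySupport, rowSupport, mem_map,
    Function.Embedding.coe_subtype]
  refine (forall_congr' fun v => fin_two_eq_iff _ _).trans ?_
  constructor
  · intro h x
    by_cases hx : x ∈ r.1.1
    · simpa [hx] using h ⟨x, hx⟩
    · simp [hx]
  · intro h v
    simpa using h v

lemma designMatrix_rowOf_binaryIndicator (F : C.facets) (S T : Finset V) :
    designMatrix C (rowOf F S) (binaryIndicator T) = if F.1 ∩ T = F.1 ∩ S then 1 else 0 := by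
  rw [designMatrix_apply_eq_ite, binarySupport_binaryIndicator, rowSupport_rowOf]
  rfl

noncomputable def faceRow {G : Finset V} (hG : G ∈ C.faces) : C.DesignRow := rowOf (facetAt hG) G

lemma designMatrix_faceRow {G : Finset V} (hG : G ∈ C.faces) (T : Finset V) :
    designMatrix C (faceRow hG) (binaryIndicator T) =
      if (facetAt hG).1 ∩ T = G then 1 else 0 := by
  rw [faceRow, designMatrix_rowOf_binaryIndicator, inter_eq_right.2 (subset_facetAt hG)]

lemma det_submatrix_faceRow_binaryIndicator {s : Finset (Finset V)} (hs : s ⊆ C.faces) :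
    ((designMatrix C).submatrix (fun G : s => faceRow (hs G.2))
      (fun G => binaryIndicator G.1)).det = 1 := by
  rw [Matrix.det_eq_prod_diag_of_ne_zero_le]
  · exact prod_eq_one fun G _ => by simp [designMatrix_faceRow, subset_facetAt]
  · intro G G' hne
    rw [Matrix.submatrix_apply, designMatrix_faceRow, ite_ne_right_iff] at hne
    exact show G.1 ⊆ G'.1 from hne.1 ▸ inter_subset_right

variable (C)

def zetaCols : Matrix C.faces (V → Fin 2) ℤ :=
  fun G i => if G.1 ⊆ binarySupport i then 1 else 0

def mobiusRows : Matrix C.DesignRow C.faces ℤ :=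
  fun r G => if G.1 ∈ Icc (rowSupport r) r.1.1 then (-1) ^ #(G.1 \ rowSupport r) else 0

/-- Entrywise this is inclusion-exclusion, `[F ∩ T = S] = ∑_{S ⊆ G ⊆ F ∩ T} (-1)^|G \ S|`,
where every such `G` is a face because `F` is. -/
theorem designMatrix_eq_mobiusRows_mul_zetaCols : designMatrix C = mobiusRows C * zetaCols C := by
  ext r i
  set S := rowSupport r
  set T := binarySupport i
  have hF := mem_faces_of_mem_facets r.1.2
  have hIcc : C.faces.filter (fun G => G ∈ Icc S r.1.1 ∧ G ⊆ T) = Icc S (r.1.1 ∩ T) := by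
    ext G
    simp only [mem_filter, mem_Icc, subset_inter_iff]
    exact ⟨fun ⟨_, ⟨h1, h2⟩, h3⟩ => ⟨h1, h2, h3⟩,
      fun ⟨h1, h2, h3⟩ => ⟨C.down_closed _ hF _ h2, ⟨h1, h2⟩, h3⟩⟩
  calc designMatrix C r i = if S = r.1.1 ∩ T then 1 else 0 := by
        rw [designMatrix_apply_eq_ite]
        exact if_congr eq_comm rfl rfl
    _ = ∑ G ∈ C.faces.filter (fun G => G ∈ Icc S r.1.1 ∧ G ⊆ T), (-1) ^ #(G \ S) := by
        rw [hIcc, sum_Icc_neg_one_pow_card_sdiff]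
    _ = ∑ G ∈ C.faces, (if G ∈ Icc S r.1.1 then (-1) ^ #(G \ S) else 0) *
          (if G ⊆ T then 1 else 0) := by
        simp only [sum_filter, ite_zero_mul_ite_zero, mul_one]
    _ = (mobiusRows C * zetaCols C) r i := (sum_coe_sort C.faces _).symm

theorem intRank_designMatrix : intRank (designMatrix C) = #C.faces := by
  apply le_antisymm
  · rw [designMatrix_eq_mobiusRows_mul_zetaCols]
    simpa using intRank_mul_le_card (mobiusRows C) (zetaCols C)
  · have := card_le_intRank_of_det_ne_zero _ _ _
      ((det_submatrix_faceRow_binaryIndicator (C := C) subset_rfl).symm ▸ one_ne_zero)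
    rwa [Fintype.card_coe] at this

end

variable {A : Finset V}

lemma mem_induce_faces {s : Finset A} :
    s ∈ (C.induce A).faces ↔ s.map (.subtype _) ∈ C.faces := by
  simp [induce]

variable (C A) in
lemma card_faces_induce : #(C.induce A).faces = #(C.faces.filter (· ⊆ A)) := by
  rw [← card_map (mapEmbedding (.subtype (· ∈ A))).toEmbedding]
  congr 1
  ext G
  simp only [mem_map, mem_induce_faces, mem_filter, RelEmbedding.coe_toEmbedding,
    mapEmbedding_apply]
  constructor
  · rintro ⟨s, hs, rfl⟩
    exact ⟨hs, fun _ hx => property_of_mem_map_subtype _ hx⟩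
  · rintro ⟨hG, hGA⟩
    exact ⟨G.subtype (· ∈ A), by rwa [subtype_map_of_mem hGA], subtype_map_of_mem hGA⟩

lemma inter_eq_map_of_mem_facets_induce {F' : Finset A} (hF' : F' ∈ (C.induce A).facets)
    {F : Finset V} (hF : F ∈ C.faces) (hF'F : F'.map (.subtype _) ⊆ F) :
    F ∩ A = F'.map (.subtype _) := by
  let t := F.subtype (· ∈ A)
  have ht : t.map (.subtype _) = F ∩ A := by rw [subtype_map, filter_mem_eq_inter]
  have htface : t ∈ (C.induce A).faces :=
    mem_induce_faces.2 (ht ▸ C.down_closed _ hF _ inter_subset_left)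
  have hF't : F' ≤ t := fun x hx => mem_subtype.2 (hF'F (mem_map_of_mem _ hx))
  rw [← ht, ((mem_facets_iff_maximal _).1 hF').eq_of_le htface hF't]

lemma inter_map_eq_map_inter_of_mem_facets_induce {F' : Finset A}
    (hF' : F' ∈ (C.induce A).facets) {F : Finset V} (hF : F ∈ C.faces)
    (hF'F : F'.map (.subtype _) ⊆ F) (X : Finset A) :
    F ∩ X.map (.subtype _) = (F' ∩ X).map (.subtype _) := by
  rw [map_inter, ← inter_eq_map_of_mem_facets_induce hF' hF hF'F, inter_assoc,
    inter_eq_right.2 fun _ hx => property_of_mem_map_subtype _ hx]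

lemma map_mem_faces_of_mem_facets_induce {F' : Finset A} (hF' : F' ∈ (C.induce A).facets) :
    F'.map (.subtype _) ∈ C.faces :=
  mem_induce_faces.1 ((mem_facets_iff_maximal _).1 hF').prop

noncomputable def liftRow (r : (C.induce A).DesignRow) : C.DesignRow :=
  rowOf (facetAt (map_mem_faces_of_mem_facets_induce r.1.2)) ((rowSupport r).map (.subtype _))

def extendTuple (c : A → Fin 2) : V → Fin 2 :=
  binaryIndicator ((binarySupport c).map (.subtype _))

variable [Fintype V]

lemma designMatrix_induce_eq :
    designMatrix (C.induce A) = (designMatrix C).submatrix liftRow extendTuple := by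
  ext r c
  have key := inter_map_eq_map_inter_of_mem_facets_induce r.1.2
    (mem_faces_of_mem_facets (facetAt (map_mem_faces_of_mem_facets_induce r.1.2)).2)
    (subset_facetAt _)
  rw [Matrix.submatrix_apply, liftRow, extendTuple, designMatrix_rowOf_binaryIndicator, key, key,
    designMatrix_apply_eq_ite]
  simp only [map_inj, inter_eq_right.2 (rowSupport_subset r)]

lemma designMatrix_faceRow_extendTuple {G : Finset V} (hG : G ∈ C.faces) (hGA : ¬ G ⊆ A)
    (c : A → Fin 2) : designMatrix C (faceRow hG) (extendTuple c) = 0 := by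
  rw [extendTuple, designMatrix_faceRow, if_neg]
  intro h
  exact hGA (h ▸ fun _ hx => property_of_mem_map_subtype _ (mem_inter.1 hx).2)

end SComplex

open SComplex in
/-- Every induced subcomplex of a unimodular simplicial complex is unimodular. -/
theorem induce_isUnimodular {V : Type} [DecidableEq V] [Fintype V]
    (C : SComplex V) (hC : C.IsUnimodular) (A : Finset V) :
    (C.induce A).IsUnimodular := by
  let B := C.faces.filter (¬ · ⊆ A)
  have hB : B ⊆ C.faces := filter_subset _ _
  have hrank : intRank (designMatrix (C.induce A)) + Fintype.card B = intRank (designMatrix C) := by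
    rw [intRank_designMatrix, intRank_designMatrix, card_faces_induce, Fintype.card_coe,
      card_filter_add_card_filter_not]
  rw [designMatrix_induce_eq] at hrank
  rw [IsUnimodular, designMatrix_induce_eq]
  exact hC.submatrix_of_zero_block _ _ (fun G : B => faceRow (hB G.2))
    (fun G => binaryIndicator G.1) hrank
    (fun G c => designMatrix_faceRow_extendTuple _ (mem_filter.1 G.2).2 c)
    (det_submatrix_faceRow_binaryIndicator hB)
end

section
/- Let C be a simplicial complex on [n] and let C' be the simplicial complex on [n+1] whose facets are the sets F ∪ {n+1} for F a facet of C (the cone over C). Then A_C is unimodular if and only if A_{C'} is unimodular. -/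
open Finset

/-!
Splitting the label of a cone facet `F ∪ {n+1}` and a column `i ∈ {0,1}^{n+1}` according to
their value at the apex `n+1` shows that, up to permuting rows and columns, `A_{cone C}` is the
block-diagonal matrix `A_C ⊕ A_C`. Permutations preserve unimodularity, and `A ⊕ A` is
unimodular iff `A` is. The rank doubles, and a maximal minor of `A ⊕ B` is either zero or
`±(minor of A) * (minor of B)`, where both minors are maximal since a larger one vanishes; so if
the maximal minors of `A` lie in `{0, ±λ}` then those of `A ⊕ A` lie in `{0, ±λ²}`. Conversely,
if `μ ≠ 0` is a maximal minor of `A`, then `μ * μ` and `μ * ν` are maximal minors of `A ⊕ A`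
for every maximal minor `ν` of `A`, which forces `ν ∈ {0, ±μ}`.
-/

open Matrix

theorem mul_eq_zero_or_eq_or_eq_neg {R : Type*} [CommRing R] {x y a b : R}
    (hx : x = 0 ∨ x = a ∨ x = -a) (hy : y = 0 ∨ y = b ∨ y = -b) :
    x * y = 0 ∨ x * y = a * b ∨ x * y = -(a * b) := by
  rcases hx with rfl | rfl | rfl <;> rcases hy with rfl | rfl | rfl <;> simp

theorem eq_zero_or_eq_or_eq_neg_of_mul {R : Type*} [CommRing R] [IsDomain R] {x y lam : R}
    (hx : x ≠ 0) (hxx : x * x = 0 ∨ x * x = lam ∨ x * x = -lam)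
    (hyx : y * x = 0 ∨ y * x = lam ∨ y * x = -lam) : y = 0 ∨ y = x ∨ y = -x := by
  have hlam : lam = x * x ∨ lam = -(x * x) := by
    rcases hxx with h | h | h
    · exact absurd h (mul_ne_zero hx hx)
    · exact Or.inl h.symm
    · exact Or.inr (by rw [h, neg_neg])
  have h0 : y * x = 0 ↔ y = 0 := by simp [hx]
  have h1 : y * x = x * x ↔ y = x := mul_left_inj' hx
  have h2 : y * x = -(x * x) ↔ y = -x := by rw [← neg_mul]; exact mul_left_inj' hx
  rcases hlam with rfl | rfl
  · rw [h0, h1, h2] at hyx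
    exact hyx
  · rw [neg_neg, h0, h1, h2] at hyx
    tauto

section Minors

variable {R : Type*} [CommRing R] {ι κ m n m' n' : Type*} [Fintype ι]

theorem Matrix.det_submatrix_equiv_eq_or_eq_neg [DecidableEq ι] [Fintype κ] [DecidableEq κ]
    (M : Matrix ι ι R) (e₁ e₂ : κ ≃ ι) :
    (M.submatrix e₁ e₂).det = M.det ∨ (M.submatrix e₁ e₂).det = -M.det := by
  have h : M.submatrix e₁ e₂ = (M.submatrix id (e₁.symm.trans e₂)).submatrix e₁ e₁ := by
    ext i j
    simp
  rw [h, det_submatrix_equiv_self, det_permute']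
  rcases Int.units_eq_one_or (Equiv.Perm.sign (e₁.symm.trans e₂)) with hs | hs <;> simp [hs]

theorem Matrix.det_eq_zero_of_card_ne [DecidableEq ι] (M : Matrix ι ι R) (p q : ι → Bool)
    (hM : ∀ i j, p i ≠ q j → M i j = 0) (hcard : #{i | p i} ≠ #{j | q j}) : M.det = 0 := by
  rw [det_apply]
  refine Finset.sum_eq_zero fun σ _ => ?_
  suffices ∃ i, p (σ i) ≠ q i by
    obtain ⟨i, hi⟩ := this
    rw [Finset.prod_eq_zero (f := fun j => M (σ j) j) (Finset.mem_univ i) (hM _ _ hi), smul_zero]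
  -- otherwise `σ` would map `{i | q i}` bijectively onto `{i | p i}`
  by_contra! hσ
  refine hcard (Finset.card_bij (fun i _ => σ.symm i) ?_ (fun _ _ _ _ h => σ.symm.injective h) ?_)
  · intro i hi
    simp_all [← hσ (σ.symm i)]
  · intro j hj
    exact ⟨σ j, by simp_all, by simp⟩

theorem Sum.exists_equiv_comp_eq_map {α β : Type*} (f : ι → α ⊕ β) {a b : ℕ}
    (ha : #{i | (f i).isLeft} = a) (hb : #{i | (f i).isRight} = b) :
    ∃ (e : Fin a ⊕ Fin b ≃ ι) (g : Fin a → α) (h : Fin b → β), f ∘ e = Sum.map g h := by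
  have hu : Fintype.card {i // (f i).isLeft} = a := by rw [Fintype.card_subtype, ha]
  have hv : Fintype.card {i // ¬ (f i).isLeft} = b := by
    simp only [Fintype.card_subtype, Bool.not_eq_true, Sum.isLeft_eq_false, ← hb]
  let u := (Fintype.equivFinOfCardEq hu).symm
  let v := (Fintype.equivFinOfCardEq hv).symm
  refine ⟨(u.sumCongr v).trans (Equiv.sumCompl _), fun x => (f (u x)).getLeft (u x).2,
    fun y => (f (v y)).getRight (by simpa using (v y).2), ?_⟩
  funext x
  rcases x with x | y <;> simp

theorem Matrix.fromBlocks_submatrix_sum_map (A : Matrix m n R) (B : Matrix m' n' R)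
    {a b : Type*} (r₁ : a → m) (c₁ : a → n) (r₂ : b → m') (c₂ : b → n') :
    (fromBlocks A 0 0 B).submatrix (Sum.map r₁ r₂) (Sum.map c₁ c₂) =
      fromBlocks (A.submatrix r₁ c₁) 0 0 (B.submatrix r₂ c₂) := by
  ext (i | i) (j | j) <;> rfl

theorem Matrix.det_submatrix_fromBlocks_zero [DecidableEq ι] (A : Matrix m n R)
    (B : Matrix m' n' R) (r : ι → m ⊕ m') (c : ι → n ⊕ n') :
    ((fromBlocks A 0 0 B).submatrix r c).det = 0 ∨
      ∃ (a b : ℕ) (_ : a + b = Fintype.card ι) (r₁ : Fin a → m) (c₁ : Fin a → n)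
        (r₂ : Fin b → m') (c₂ : Fin b → n'),
        ((fromBlocks A 0 0 B).submatrix r c).det =
            (A.submatrix r₁ c₁).det * (B.submatrix r₂ c₂).det ∨
          ((fromBlocks A 0 0 B).submatrix r c).det =
            -((A.submatrix r₁ c₁).det * (B.submatrix r₂ c₂).det) := by
  by_cases hcard : #{i | (r i).isLeft} = #{j | (c j).isLeft}
  · right
    have hrc : #{i | (r i).isRight} = #{j | (c j).isRight} := by
      have hr := Finset.card_filter_add_card_filter_not (s := univ) fun i => (r i).isLeft
      have hc := Finset.card_filter_add_card_filter_not (s := univ) fun j => (c j).isLeft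
      simp only [Bool.not_eq_true, Sum.isLeft_eq_false] at hr hc
      omega
    obtain ⟨e₁, r₁, r₂, hr⟩ := Sum.exists_equiv_comp_eq_map r rfl rfl
    obtain ⟨e₂, c₁, c₂, hc⟩ := Sum.exists_equiv_comp_eq_map c hcard.symm hrc.symm
    refine ⟨_, _, by simpa using (Fintype.card_congr e₁), r₁, c₁, r₂, c₂, ?_⟩
    have hblocks : ((fromBlocks A 0 0 B).submatrix r c).submatrix e₁ e₂ =
        fromBlocks (A.submatrix r₁ c₁) 0 0 (B.submatrix r₂ c₂) := by
      rw [submatrix_submatrix, hr, hc, fromBlocks_submatrix_sum_map]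
    rcases det_submatrix_equiv_eq_or_eq_neg ((fromBlocks A 0 0 B).submatrix r c) e₁ e₂ with
      h | h <;> rw [hblocks, det_fromBlocks_zero₁₂] at h
    · exact Or.inl h.symm
    · exact Or.inr (by rw [h, neg_neg])
  · left
    refine det_eq_zero_of_card_ne _ _ _ (fun i j hij => ?_) hcard
    rcases hi : r i with i' | i' <;> rcases hj : c j with j' | j' <;> simp_all

end Minors

section Rank

variable {K : Type*} [Field K] {ι m n m' n' : Type*} [Fintype n] [Fintype n']

theorem Matrix.det_submatrix_eq_zero_of_rank_lt [Fintype ι] [DecidableEq ι] (A : Matrix m n K)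
    (hk : A.rank < Fintype.card ι) (r : ι → m) (c : ι → n) : (A.submatrix r c).det = 0 := by
  by_contra h
  have := rank_submatrix_le A r c
  rw [rank_of_det_ne_zero h] at this
  omega

theorem Submodule.finrank_prod {R M N : Type*} [Field R] [AddCommGroup M] [AddCommGroup N]
    [Module R M] [Module R N] (p : Submodule R M) (q : Submodule R N) [FiniteDimensional R p]
    [FiniteDimensional R q] :
    Module.finrank R (p.prod q) = Module.finrank R p + Module.finrank R q := by
  let e : p.prod q ≃ₗ[R] p × q :=
    { toFun x := (⟨x.1.1, x.2.1⟩, ⟨x.1.2, x.2.2⟩)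
      invFun y := ⟨(y.1.1, y.2.1), ⟨y.1.2, y.2.2⟩⟩
      map_add' _ _ := rfl
      map_smul' _ _ := rfl
      left_inv _ := rfl
      right_inv _ := rfl }
  rw [e.finrank_eq, Module.finrank_prod]

theorem Matrix.rank_fromBlocks_zero (A : Matrix m n K) (B : Matrix m' n' K) :
    (fromBlocks A 0 0 B).rank = A.rank + B.rank := by
  let e₁ := LinearEquiv.sumArrowLequivProdArrow n n' K K
  let e₂ := LinearEquiv.sumArrowLequivProdArrow m m' K K
  have h : (fromBlocks A 0 0 B).mulVecLin =
      e₂.symm.toLinearMap ∘ₗ (A.mulVecLin.prodMap B.mulVecLin) ∘ₗ e₁.toLinearMap := by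
    refine LinearMap.ext fun x => funext fun i => ?_
    rcases i with i | i <;>
      simp [e₁, e₂, LinearEquiv.sumArrowLequivProdArrow, fromBlocks_mulVec,
        Equiv.sumArrowEquivProdArrow]
  rw [rank, h, LinearMap.range_comp, LinearMap.range_comp_of_range_eq_top _ e₁.range,
    LinearEquiv.finrank_map_eq, LinearMap.range_prodMap, Submodule.finrank_prod]
  rfl

end Rank

section IntUnimodular

variable {m n m' n' m₀ n₀ : Type} [Fintype n] [Fintype n']

theorem intRank_submatrix_equiv [Fintype n₀] (A : Matrix m n ℤ) (e₁ : m₀ ≃ m) (e₂ : n₀ ≃ n) :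
    intRank (A.submatrix e₁ e₂) = intRank A :=
  rank_submatrix (A.map ((↑·) : ℤ → ℚ)) e₁ e₂

theorem det_submatrix_eq_zero_of_intRank_lt {ι : Type} [Fintype ι] [DecidableEq ι]
    (A : Matrix m n ℤ) (hk : intRank A < Fintype.card ι) (r : ι → m) (c : ι → n) :
    (A.submatrix r c).det = 0 := by
  have h := (A.map ((↑·) : ℤ → ℚ)).det_submatrix_eq_zero_of_rank_lt hk r c
  rwa [submatrix_map, ← Int.cast_det, Int.cast_eq_zero] at h

theorem intRank_fromBlocks_zero (A : Matrix m n ℤ) (B : Matrix m' n' ℤ) :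
    intRank (fromBlocks A 0 0 B) = intRank A + intRank B := by
  rw [intRank, fromBlocks_map, Matrix.map_zero _ Int.cast_zero, Matrix.map_zero _ Int.cast_zero,
    rank_fromBlocks_zero]
  rfl

variable [Fintype m] [Fintype m']

theorem intUnimodular_iff_forall_card (A : Matrix m n ℤ) :
    IntUnimodular A ↔ ∃ lam : ℤ, lam ≠ 0 ∧ ∀ (ι : Type) [Fintype ι] [DecidableEq ι],
      Fintype.card ι = intRank A → ∀ (r : ι → m) (c : ι → n),
        (A.submatrix r c).det = 0 ∨ (A.submatrix r c).det = lam ∨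
          (A.submatrix r c).det = -lam := by
  refine ⟨fun ⟨lam, hlam, h⟩ => ⟨lam, hlam, fun ι _ _ hι r c => ?_⟩,
    fun ⟨lam, hlam, h⟩ => ⟨lam, hlam, h _ (Fintype.card_fin _)⟩⟩
  let e := Fintype.equivFinOfCardEq hι
  have hdet : (A.submatrix r c).det = (A.submatrix (r ∘ e.symm) (c ∘ e.symm)).det := by
    rw [← det_submatrix_equiv_self e.symm, submatrix_submatrix]
  rw [hdet]
  exact h _ _

theorem IntUnimodular.submatrix_equiv [Fintype m₀] [Fintype n₀]
    {A : Matrix m n ℤ} (hA : IntUnimodular A) (e₁ : m₀ ≃ m) (e₂ : n₀ ≃ n) :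
    IntUnimodular (A.submatrix e₁ e₂) := by
  obtain ⟨lam, hlam, h⟩ := (intUnimodular_iff_forall_card A).mp hA
  refine (intUnimodular_iff_forall_card _).mpr ⟨lam, hlam, fun ι _ _ hι r c => ?_⟩
  rw [submatrix_submatrix]
  exact h ι (hι.trans (intRank_submatrix_equiv A e₁ e₂)) _ _

theorem intUnimodular_submatrix_equiv_iff [Fintype m₀] [Fintype n₀]
    (A : Matrix m n ℤ) (e₁ : m₀ ≃ m) (e₂ : n₀ ≃ n) :
    IntUnimodular (A.submatrix e₁ e₂) ↔ IntUnimodular A :=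
  ⟨fun h => by simpa using h.submatrix_equiv e₁.symm e₂.symm, fun h => h.submatrix_equiv e₁ e₂⟩

theorem IntUnimodular.fromBlocks {A : Matrix m n ℤ} {B : Matrix m' n' ℤ} (hA : IntUnimodular A)
    (hB : IntUnimodular B) : IntUnimodular (Matrix.fromBlocks A 0 0 B) := by
  obtain ⟨lam, hlam, hA⟩ := (intUnimodular_iff_forall_card A).mp hA
  obtain ⟨mu, hmu, hB⟩ := (intUnimodular_iff_forall_card B).mp hB
  refine (intUnimodular_iff_forall_card _).mpr ⟨lam * mu, mul_ne_zero hlam hmu,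
    fun ι _ _ hι r c => ?_⟩
  rcases det_submatrix_fromBlocks_zero A B r c with h0 | ⟨a, b, hab, r₁, c₁, r₂, c₂, hdet⟩
  · exact Or.inl h0
  rw [hι, intRank_fromBlocks_zero] at hab
  rcases lt_trichotomy a (intRank A) with hlt | rfl | hgt
  · have hB0 := det_submatrix_eq_zero_of_intRank_lt B (by rw [Fintype.card_fin]; omega) r₂ c₂
    left
    rcases hdet with h | h <;> simp [h, hB0]
  · obtain rfl : b = intRank B := by omega
    have h := mul_eq_zero_or_eq_or_eq_neg (hA (Fin _) (Fintype.card_fin _) r₁ c₁)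
      (hB (Fin _) (Fintype.card_fin _) r₂ c₂)
    rcases hdet with hdet | hdet <;> rw [hdet]
    · exact h
    · rcases h with h | h | h <;> simp [h]
  · have hA0 := det_submatrix_eq_zero_of_intRank_lt A (by rwa [Fintype.card_fin]) r₁ c₁
    left
    rcases hdet with h | h <;> simp [h, hA0]

theorem IntUnimodular.of_fromBlocks_self {A : Matrix m n ℤ}
    (hAA : IntUnimodular (Matrix.fromBlocks A 0 0 A)) : IntUnimodular A := by
  obtain ⟨lam, -, h⟩ := (intUnimodular_iff_forall_card (Matrix.fromBlocks A 0 0 A)).mp hAA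
  have hpair : ∀ (r₁ : Fin (intRank A) → m) (c₁ : Fin (intRank A) → n) (r₂ : Fin (intRank A) → m)
      (c₂ : Fin (intRank A) → n), (A.submatrix r₁ c₁).det * (A.submatrix r₂ c₂).det = 0 ∨
        (A.submatrix r₁ c₁).det * (A.submatrix r₂ c₂).det = lam ∨
        (A.submatrix r₁ c₁).det * (A.submatrix r₂ c₂).det = -lam := by
    intro r₁ c₁ r₂ c₂
    have := h (Fin (intRank A) ⊕ Fin (intRank A)) (by simp [intRank_fromBlocks_zero])
      (Sum.map r₁ r₂) (Sum.map c₁ c₂)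
    rwa [fromBlocks_submatrix_sum_map, det_fromBlocks_zero₁₂] at this
  by_cases hzero : ∀ (r : Fin (intRank A) → m) (c : Fin (intRank A) → n), (A.submatrix r c).det = 0
  · exact ⟨1, one_ne_zero, fun r c => Or.inl (hzero r c)⟩
  push Not at hzero
  obtain ⟨r₀, c₀, h₀⟩ := hzero
  exact ⟨_, h₀, fun r c => eq_zero_or_eq_or_eq_neg_of_mul h₀ (hpair r₀ c₀ r₀ c₀) (hpair r c r₀ c₀)⟩

theorem intUnimodular_fromBlocks_self_iff (A : Matrix m n ℤ) :
    IntUnimodular (fromBlocks A 0 0 A) ↔ IntUnimodular A :=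
  ⟨IntUnimodular.of_fromBlocks_self, fun h => h.fromBlocks h⟩

end IntUnimodular

def Equiv.prodFinTwoEquivSum (α : Type*) : α × Fin 2 ≃ α ⊕ α :=
  ((Equiv.refl α).prodCongr finTwoEquiv).trans
    ((Equiv.prodComm α Bool).trans (Equiv.boolProdEquivSum α))

theorem Matrix.blockDiagonal_fin_two {R : Type*} [Zero R] {m n : Type*}
    (M : Fin 2 → Matrix m n R) :
    blockDiagonal M =
      (fromBlocks (M 0) 0 0 (M 1)).submatrix (Equiv.prodFinTwoEquivSum m)
        (Equiv.prodFinTwoEquivSum n) := by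
  ext ⟨i, a⟩ ⟨j, b⟩
  fin_cases a <;> fin_cases b <;> rfl

namespace SComplex

theorem mem_facets {V : Type} [DecidableEq V] {C : SComplex V} {F : Finset V} :
    F ∈ C.facets ↔ F ∈ C.faces ∧ ∀ G ∈ C.faces, F ⊆ G → F = G := by
  simp [facets]

variable {n : ℕ}

def coneBase (s : Finset (Fin (n + 1))) : Finset (Fin n) :=
  univ.filter fun v => v.castSucc ∈ s

def coneFace (F : Finset (Fin n)) : Finset (Fin (n + 1)) :=
  insert (Fin.last n) (F.map Fin.castSuccEmb)

@[simp]
theorem mem_coneBase {s : Finset (Fin (n + 1))} {v : Fin n} :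
    v ∈ coneBase s ↔ v.castSucc ∈ s := by
  simp [coneBase]

theorem mem_cone_faces {C : SComplex (Fin n)} {s : Finset (Fin (n + 1))} :
    s ∈ (cone C).faces ↔ coneBase s ∈ C.faces := by
  simp [cone, coneBase]

theorem gc_coneBase_coneFace : GaloisConnection (coneBase (n := n)) coneFace := by
  intro s F
  simp only [Finset.subset_iff, mem_coneBase, coneFace, Finset.mem_insert,
    Finset.mem_map, Fin.coe_castSuccEmb]
  constructor
  · intro h v hv
    induction v using Fin.lastCases with
    | last => exact Or.inl rfl
    | cast v => exact Or.inr ⟨v, h hv, rfl⟩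
  · intro h v hv
    rcases h hv with h | ⟨w, hw, hwv⟩
    · exact absurd h (Fin.castSucc_ne_last v)
    · rwa [← Fin.castSucc_injective _ hwv]

@[simp]
theorem coneBase_coneFace (F : Finset (Fin n)) : coneBase (coneFace F) = F := by
  ext v
  simp [coneFace, Fin.castSucc_ne_last]

variable {C : SComplex (Fin n)}

theorem coneFace_mem_facets_cone {F : Finset (Fin n)} (hF : F ∈ C.facets) :
    coneFace F ∈ (cone C).facets := by
  rw [mem_facets] at hF ⊢
  refine ⟨by rw [mem_cone_faces, coneBase_coneFace]; exact hF.1, fun G hG hFG => ?_⟩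
  have hF_eq : F = coneBase G :=
    hF.2 _ (mem_cone_faces.mp hG) (by simpa using gc_coneBase_coneFace.monotone_l hFG)
  exact hFG.antisymm (hF_eq ▸ gc_coneBase_coneFace.le_u_l G)

theorem coneFace_coneBase_of_mem_facets_cone {F : Finset (Fin (n + 1))}
    (hF : F ∈ (cone C).facets) : coneFace (coneBase F) = F := by
  rw [mem_facets] at hF
  refine (hF.2 _ ?_ (gc_coneBase_coneFace.le_u_l F)).symm
  rw [mem_cone_faces, coneBase_coneFace]
  exact mem_cone_faces.mp hF.1

theorem coneBase_mem_facets {F : Finset (Fin (n + 1))} (hF : F ∈ (cone C).facets) :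
    coneBase F ∈ C.facets := by
  rw [mem_facets] at hF ⊢
  refine ⟨mem_cone_faces.mp hF.1, fun G hG hFG => ?_⟩
  have hF_eq : F = coneFace G := hF.2 _ (by rwa [mem_cone_faces, coneBase_coneFace])
    ((gc_coneBase_coneFace.le_u_l F).trans (gc_coneBase_coneFace.monotone_u hFG))
  rw [hF_eq, coneBase_coneFace]

theorem last_mem_of_mem_facets_cone {F : Finset (Fin (n + 1))} (hF : F ∈ (cone C).facets) :
    Fin.last n ∈ F := by
  rw [← coneFace_coneBase_of_mem_facets_cone hF]
  exact Finset.mem_insert_self _ _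

variable (C) in
def facetsConeEquiv : {F // F ∈ (cone C).facets} ≃ {F // F ∈ C.facets} where
  toFun F := ⟨coneBase F.1, coneBase_mem_facets F.2⟩
  invFun F := ⟨coneFace F.1, coneFace_mem_facets_cone F.2⟩
  left_inv F := Subtype.ext (coneFace_coneBase_of_mem_facets_cone F.2)
  right_inv F := Subtype.ext (coneBase_coneFace F.1)

@[simps]
def splitLastEquiv (β : Type*) {s : Finset (Fin (n + 1))} (hs : Fin.last n ∈ s) :
    ({v // v ∈ s} → β) ≃ ({v // v ∈ coneBase s} → β) × β where
  toFun j := (fun v => j ⟨v.1.castSucc, mem_coneBase.mp v.2⟩, j ⟨Fin.last n, hs⟩)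
  invFun p v := if h : v.1 = Fin.last n then p.2 else p.1 ⟨v.1.castPred h, by simp [v.2]⟩
  left_inv j := by
    funext ⟨v, hv⟩
    by_cases h : v = Fin.last n
    · subst h
      simp
    · simp [h]
  right_inv p := by
    ext v
    · simp [Fin.castSucc_ne_last]
    · simp

variable (C) in
def coneRowEquiv :
    ((F : {F // F ∈ (cone C).facets}) × ({v // v ∈ F.1} → Fin 2)) ≃
      ((F : {F // F ∈ C.facets}) × ({v // v ∈ F.1} → Fin 2)) × Fin 2 :=
  (Equiv.sigmaCongr (facetsConeEquiv C)
    fun F => splitLastEquiv (Fin 2) (last_mem_of_mem_facets_cone F.2)).trans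
    (Equiv.sigmaProdDistrib _ _).symm

variable (C) in
theorem designMatrix_cone :
    designMatrix (cone C) = (blockDiagonal fun _ : Fin 2 => designMatrix C).submatrix
      (coneRowEquiv C) ((Fin.snocEquiv fun _ => Fin 2).symm.trans (Equiv.prodComm _ _)) := by
  ext ⟨F, j⟩ i
  simp only [designMatrix, designMatrixD, submatrix_apply, blockDiagonal_apply, coneRowEquiv,
    Equiv.trans_apply, Equiv.sigmaCongr, Equiv.sigmaCongrRight, Equiv.sigmaCongrLeft,
    Equiv.sigmaProdDistrib, Equiv.coe_fn_mk, Equiv.coe_fn_symm_mk, Equiv.prodComm_apply,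
    Fin.snocEquiv_symm_apply, Prod.fst_swap, Prod.snd_swap]
  rw [← ite_and]
  refine if_congr ?_ rfl rfl
  rw [Subtype.forall, Fin.forall_fin_succ', and_comm]
  exact and_congr ⟨fun h => (h (last_mem_of_mem_facets_cone F.2)).symm, fun h _ => h.symm⟩
    ⟨fun h v => h v (mem_coneBase.mp v.2), fun h v hv => h ⟨v, mem_coneBase.mpr hv⟩⟩

end SComplex

/-- `A_C` is unimodular iff the design matrix of the cone over `C` is unimodular. -/
theorem isUnimodular_iff_cone_isUnimodular {n : ℕ} (C : SComplex (Fin n)) :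
    C.IsUnimodular ↔ (SComplex.cone C).IsUnimodular := by
  rw [SComplex.IsUnimodular, SComplex.IsUnimodular, SComplex.designMatrix_cone,
    intUnimodular_submatrix_equiv_iff, Matrix.blockDiagonal_fin_two,
    intUnimodular_submatrix_equiv_iff, intUnimodular_fromBlocks_self_iff]
end

section
/- For all m, n ≥ 0, the disjoint union of an m-simplex and an n-simplex, Δ_m ⊔ Δ_n, is a unimodular simplicial complex. -/
open Finset

/-!
The design matrix of a complex with two facets `F₁, F₂` is the incidence matrix of a bipartite
graph: its rows are the vertices, split by facet, and the column of `i` is the edge joining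
`(F₁, i|F₁)` and `(F₂, i|F₂)`. Such a matrix is totally unimodular: a square submatrix either
has a column with at most one nonzero entry, and we expand along it, or each of its columns has
one `1` on each side, and then the rows of one side minus those of the other sum to zero.
-/

namespace Matrix

variable {m n R : Type*} [CommRing R]

theorem det_eq_zero_of_vecMul_eq_zero {k : Type*} [Fintype k] [DecidableEq k]
    {M : Matrix k k R} {v : k → R} (hv : v ᵥ* M = 0) {i : k} (hi : IsUnit (v i)) :
    M.det = 0 := by
  have h := congrFun (congrArg (· ᵥ* M.adjugate) hv) i
  simp only [vecMul_vecMul, mul_adjugate, zero_vecMul, vecMul_smul, vecMul_one,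
    Pi.smul_apply, smul_eq_mul, Pi.zero_apply] at h
  exact hi.mul_left_eq_zero.mp h

/-- `A` is the vertex-edge incidence matrix of a bipartite multigraph whose sides are the two
colour classes of rows (columns may also be edges with fewer than two ends). -/
structure IsBipartiteIncidence (A : Matrix m n R) (p : m → Bool) : Prop where
  eq_zero_or_eq_one : ∀ i j, A i j = 0 ∨ A i j = 1
  eq_of_ne_zero : ∀ j i i', p i = p i' → A i j ≠ 0 → A i' j ≠ 0 → i = i'

namespace IsBipartiteIncidence

variable {A : Matrix m n R} {p : m → Bool}

theorem submatrix (hA : A.IsBipartiteIncidence p) {m' n' : Type*} {f : m' → m}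
    (hf : f.Injective) (g : n' → n) : (A.submatrix f g).IsBipartiteIncidence (p ∘ f) where
  eq_zero_or_eq_one i j := hA.eq_zero_or_eq_one (f i) (g j)
  eq_of_ne_zero j i i' hp hi hi' := hf (hA.eq_of_ne_zero (g j) (f i) (f i') hp hi hi')

theorem eq_one_of_ne_zero (hA : A.IsBipartiteIncidence p) {i j} (h : A i j ≠ 0) : A i j = 1 :=
  (hA.eq_zero_or_eq_one i j).resolve_left h

theorem vecMul_sign_eq_zero [Fintype m] (hA : A.IsBipartiteIncidence p)
    (htwo : ∀ j, ∃ i i', i ≠ i' ∧ A i j ≠ 0 ∧ A i' j ≠ 0) :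
    (fun i => if p i then (1 : R) else -1) ᵥ* A = 0 := by
  funext j
  obtain ⟨i, i', hne, hi, hi'⟩ := htwo j
  have hp : p i ≠ p i' := fun h => hne (hA.eq_of_ne_zero j i i' h hi hi')
  have hzero : ∀ i'', i'' ≠ i ∧ i'' ≠ i' → A i'' j = 0 := by
    rintro i'' ⟨h, h'⟩
    by_contra hi''
    have hcol : p i'' = p i ∨ p i'' = p i' := by
      revert hp; cases p i'' <;> cases p i <;> cases p i' <;> simp
    rcases hcol with hc | hc
    · exact h (hA.eq_of_ne_zero j _ _ hc hi'' hi)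
    · exact h' (hA.eq_of_ne_zero j _ _ hc hi'' hi')
  rw [vecMul, dotProduct, Fintype.sum_eq_add i i' hne fun x hx => by rw [hzero x hx, mul_zero],
    hA.eq_one_of_ne_zero hi, hA.eq_one_of_ne_zero hi']
  revert hp; cases p i <;> cases p i' <;> simp

theorem det_mem_range_signType {k : ℕ} {B : Matrix (Fin k) (Fin k) R} {p : Fin k → Bool}
    (hB : B.IsBipartiteIncidence p) : B.det ∈ Set.range SignType.cast := by
  induction k with
  | zero => exact ⟨1, by simp⟩
  | succ k ih =>
    by_cases htwo : ∀ j, ∃ i i', i ≠ i' ∧ B i j ≠ 0 ∧ B i' j ≠ 0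
    · have hunit : IsUnit (if p 0 then (1 : R) else -1) := by split <;> simp
      exact ⟨0, (det_eq_zero_of_vecMul_eq_zero (hB.vecMul_sign_eq_zero htwo) hunit).symm⟩
    push Not at htwo
    obtain ⟨j, hj⟩ := htwo
    by_cases hcol : ∃ i, B i j ≠ 0
    · obtain ⟨i, hi⟩ := hcol
      obtain ⟨s, hs⟩ := ih (hB.submatrix (Fin.succAbove_right_injective (p := i)) j.succAbove)
      refine ⟨(-1) ^ (i + j : ℕ) * s, ?_⟩
      rw [det_succ_column B j, Fintype.sum_eq_single i fun i' h => by rw [hj i i' h.symm hi]; simp,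
        hB.eq_one_of_ne_zero hi, ← hs]
      simp
    · push Not at hcol
      exact ⟨0, (det_eq_zero_of_column_eq_zero j hcol).symm⟩

theorem isTotallyUnimodular (hA : A.IsBipartiteIncidence p) : A.IsTotallyUnimodular :=
  fun _ _ g hf _ => (hA.submatrix hf g).det_mem_range_signType

end IsBipartiteIncidence

end Matrix

theorem Matrix.IsTotallyUnimodular.intUnimodular {m n : Type} [Fintype m] [Fintype n]
    {A : Matrix m n ℤ} (hA : A.IsTotallyUnimodular) : IntUnimodular A := by
  refine ⟨1, one_ne_zero, fun r c => ?_⟩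
  obtain ⟨s, hs⟩ := (Matrix.isTotallyUnimodular_iff A).mp hA _ r c
  rw [← hs]
  cases s <;> simp

namespace SComplex

variable {V : Type} [DecidableEq V]

theorem designMatrixD_eq_zero_or_eq_one (C : SComplex V) (d : V → ℕ) r i :
    C.designMatrixD d r i = 0 ∨ C.designMatrixD d r i = 1 := by
  unfold designMatrixD
  split_ifs <;> simp

theorem designMatrixD_ne_zero_iff {C : SComplex V} {d : V → ℕ} {r i} :
    C.designMatrixD d r i ≠ 0 ↔ ∀ v, i v.1 = r.2 v := by
  unfold designMatrixD
  split_ifs with h <;> simpa using h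

theorem designMatrixD_isBipartiteIncidence {C : SComplex V} (d : V → ℕ) {F₁ F₂ : Finset V}
    (hC : ∀ F ∈ C.facets, F = F₁ ∨ F = F₂) :
    (C.designMatrixD d).IsBipartiteIncidence fun r => decide (r.1.1 = F₁) where
  eq_zero_or_eq_one := C.designMatrixD_eq_zero_or_eq_one d
  eq_of_ne_zero := by
    rintro i ⟨⟨F, hF⟩, a⟩ ⟨⟨F', hF'⟩, a'⟩ hp ha ha'
    have hFF' : F = F' := by
      rcases hC F hF with rfl | rfl <;> rcases hC F' hF' with rfl | rfl <;> simp_all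
    subst hFF'
    rw [designMatrixD_ne_zero_iff] at ha ha'
    exact Sigma.ext rfl (heq_of_eq (funext fun v => (ha v).symm.trans (ha' v)))

variable [Fintype V]

theorem facets_gen_subset {gens : Finset (Finset V)} : (gen gens).facets ⊆ gens := by
  intro F hF
  simp only [facets, gen, mem_filter, mem_univ, true_and] at hF
  obtain ⟨⟨g, hg, hFg⟩, hmax⟩ := hF
  rwa [hmax g ⟨g, hg, subset_rfl⟩ hFg]

theorem isUnimodular_of_forall_facet_eq_or_eq {C : SComplex V} {F₁ F₂ : Finset V}
    (hC : ∀ F ∈ C.facets, F = F₁ ∨ F = F₂) : C.IsUnimodular :=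
  (designMatrixD_isBipartiteIncidence _ hC).isTotallyUnimodular.intUnimodular

theorem gen_pair_isUnimodular (F₁ F₂ : Finset V) : (gen {F₁, F₂}).IsUnimodular :=
  isUnimodular_of_forall_facet_eq_or_eq fun _ hF => by simpa using facets_gen_subset hF

end SComplex

/-- For all `m, k ≥ 0`, the disjoint union `Δ_m ⊔ Δ_k` of two simplices is unimodular. -/
theorem disjSimplices_isUnimodular (m k : ℕ) :
    (SComplex.disjSimplices m k).IsUnimodular :=
  SComplex.gen_pair_isUnimodular _ _
end

section
/- If C is a β-avoiding simplicial complex, then its Alexander dual C* is also β-avoiding. -/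
open Finset

/-!
Taking minors commutes with Alexander duality once deletion and link are swapped: for disjoint
`R`, `S` and `F ⊆ (R ∪ S)ᶜ`, the complement of `F ∪ R` is `((R ∪ S)ᶜ ∖ F) ∪ S`, so
`link_R (C* ∖ S) = (link_S (C ∖ R))*`. This is the dual of a minor of `C` when `S ∈ C`, and a
full simplex when `S ∉ C`. Hence a minor `D` of `C*` that is not a simplex has `D*` as a minor
of `C`. The list of forbidden minors is closed under duality: `P_4`, `J_2` and `∂Δ_n ⊔ {v}` are
self-dual, while `O_6` and `J_1` are exchanged with their duals.
-/

namespace SComplex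

variable {V W X : Type}

theorem ext {C D : SComplex V} (h : C.faces = D.faces) : C = D := by
  cases C; cases D; cases h; rfl

@[simp]
theorem mem_dual [DecidableEq V] [Fintype V] {C : SComplex V} {s : Finset V} :
    s ∈ C.dual.faces ↔ sᶜ ∉ C.faces := by
  simp [dual]

@[simp]
theorem dual_dual [DecidableEq V] [Fintype V] (C : SComplex V) : C.dual.dual = C :=
  ext <| Finset.ext fun s => by simp

theorem Isomorphic.refl [DecidableEq V] (C : SComplex V) : C.Isomorphic C :=
  ⟨Equiv.refl V, fun s => by simp⟩

theorem isomorphic_dual_dual [DecidableEq V] [Fintype V] (C : SComplex V) :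
    C.Isomorphic C.dual.dual := by
  rw [dual_dual]; exact .refl C

theorem Isomorphic.trans [DecidableEq W] [DecidableEq X] {C : SComplex V} {D : SComplex W}
    {E : SComplex X} (h₁ : C.Isomorphic D) (h₂ : D.Isomorphic E) : C.Isomorphic E := by
  obtain ⟨e₁, he₁⟩ := h₁
  obtain ⟨e₂, he₂⟩ := h₂
  exact ⟨e₁.trans e₂, fun s => by rw [he₁, he₂, Finset.image_image]; rfl⟩

theorem _root_.Finset.image_equiv_compl [DecidableEq V] [Fintype V] [DecidableEq W] [Fintype W]
    (e : V ≃ W) (s : Finset V) : (s.image e)ᶜ = sᶜ.image e := by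
  ext w
  simp [← e.eq_symm_apply]

theorem Isomorphic.dual [DecidableEq V] [Fintype V] [DecidableEq W] [Fintype W]
    {C : SComplex V} {D : SComplex W} (h : C.Isomorphic D) : C.dual.Isomorphic D.dual := by
  obtain ⟨e, he⟩ := h
  exact ⟨e, fun s => by rw [mem_dual, mem_dual, Finset.image_equiv_compl, he]⟩

theorem IsMinor.of_isomorphic [DecidableEq V] [Fintype V] [DecidableEq W] [DecidableEq X]
    {C : SComplex V} {D : SComplex W} {E : SComplex X} (h : E.Isomorphic D)
    (hD : D.IsMinor C) : E.IsMinor C := by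
  obtain ⟨R, S, hRS, hR, hiso⟩ := hD
  exact ⟨R, S, hRS, hR, h.trans hiso⟩

section Minor

variable [DecidableEq V] [Fintype V]

theorem compl_map_subtype_union {R S : Finset V} (hRS : Disjoint R S)
    (s : Finset {v // v ∈ (R ∪ S)ᶜ}) :
    (s.map (Function.Embedding.subtype _) ∪ R)ᶜ = sᶜ.map (Function.Embedding.subtype _) ∪ S := by
  ext v
  by_cases hR : v ∈ R <;> by_cases hS : v ∈ S
  · exact absurd hS (Finset.disjoint_left.mp hRS hR)
  all_goals simp [hR, hS]

theorem minorAt_dual_isomorphic (C : SComplex V) {R S : Finset V} (hRS : Disjoint R S) :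
    (C.dual.minorAt R S).Isomorphic (C.minorAt S R).dual := by
  let e : {v // v ∈ (R ∪ S)ᶜ} ≃ {v // v ∈ (S ∪ R)ᶜ} :=
    Equiv.subtypeEquivRight fun v => by rw [union_comm]
  refine ⟨e, fun s => ?_⟩
  have hval : (sᶜ.image e).map (Function.Embedding.subtype _) =
      sᶜ.map (Function.Embedding.subtype _) := by
    rw [← Equiv.coe_toEmbedding, ← map_eq_image, map_map]; rfl
  simp only [minorAt, mem_filter, mem_univ, true_and, mem_dual]
  rw [Finset.image_equiv_compl, hval, compl_map_subtype_union hRS]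

theorem mem_minorAt_dual_of_notMem (C : SComplex V) {R S : Finset V} (hRS : Disjoint R S)
    (hS : S ∉ C.faces) (s : Finset {v // v ∈ (R ∪ S)ᶜ}) : s ∈ (C.dual.minorAt R S).faces := by
  simp only [minorAt, mem_filter, mem_univ, true_and, mem_dual, compl_map_subtype_union hRS]
  exact fun h => hS (C.down_closed _ h _ subset_union_right)

theorem IsMinor.dual_of_dual [DecidableEq W] [Fintype W] {C : SComplex V} {D : SComplex W}
    (hD : ∃ t, t ∉ D.faces) (h : D.IsMinor C.dual) : D.dual.IsMinor C := by
  obtain ⟨R, S, hRS, -, hiso⟩ := h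
  by_cases hS : S ∈ C.faces
  · refine ⟨S, R, hRS.symm, hS, ?_⟩
    simpa using (hiso.trans (C.minorAt_dual_isomorphic hRS)).dual
  · obtain ⟨t, ht⟩ := hD
    obtain ⟨e, he⟩ := hiso
    exact absurd ((he t).mpr (C.mem_minorAt_dual_of_notMem hRS hS _)) ht

theorem not_isMinor_dual [DecidableEq W] [Fintype W] [DecidableEq X] {C : SComplex V}
    {D : SComplex W} {E : SComplex X} (hD : ∃ t, t ∉ D.faces) (hE : E.Isomorphic D.dual)
    (hC : ¬ E.IsMinor C) : ¬ D.IsMinor C.dual :=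
  fun h => hC ((h.dual_of_dual hD).of_isomorphic hE)

end Minor

theorem P4_isomorphic_dual : P4.Isomorphic P4.dual :=
  ⟨⟨![3, 1, 2, 0], ![3, 1, 2, 0], by decide, by decide⟩, by decide⟩

theorem J2_isomorphic_dual : J2.Isomorphic J2.dual :=
  ⟨⟨![0, 1, 3, 2, 4], ![0, 1, 3, 2, 4], by decide, by decide⟩, by decide⟩

theorem mem_bdyDisjPt {k : ℕ} {s : Finset (Fin (k + 2))} :
    s ∈ (bdyDisjPt k).faces ↔ s ⊂ {Fin.last (k + 1)}ᶜ ∨ s = {Fin.last (k + 1)} := by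
  have hbase : (univ.filter fun x : Fin (k + 2) => (x : ℕ) < k + 1) = {Fin.last (k + 1)}ᶜ := by
    ext x
    simp only [mem_filter, mem_univ, true_and, mem_compl, mem_singleton, Fin.ext_iff, Fin.val_last]
    omega
  simp only [bdyDisjPt, mem_filter, mem_univ, true_and, hbase]

theorem bdyDisjPt_dual (k : ℕ) : (bdyDisjPt k).dual = bdyDisjPt k := by
  refine ext <| Finset.ext fun s => ?_
  rw [mem_dual, mem_bdyDisjPt, mem_bdyDisjPt, compl_ssubset_compl, not_or, compl_eq_comm,
    eq_comm (b := s)]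
  set l := Fin.last (k + 1)
  by_cases hl : l ∈ s
  · have hls : ¬ s ⊂ {l}ᶜ := fun h => by simpa using h.1 hl
    have hsl : s ≠ {l}ᶜ := by rintro rfl; simp at hl
    refine ⟨fun h => .inr (LE.le.eq_of_not_ssubset (singleton_subset_iff.2 hl) h.1).symm, ?_⟩
    rintro (h | rfl)
    exacts [absurd h hls, ⟨ssubset_irrefl _, hsl⟩]
  · have hls : ¬ {l} ⊂ s := fun h => hl (h.1 (mem_singleton_self l))
    have hsl : s ≠ {l} := by rintro rfl; simp at hl
    simp only [hls, hsl, not_false_eq_true, true_and, or_false]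
    exact ⟨fun h => Finset.ssubset_iff_subset_ne.2 ⟨subset_compl_singleton.2 hl, h⟩, fun h => h.ne⟩

theorem univ_notMem_bdyDisjPt (k : ℕ) : (univ : Finset (Fin (k + 2))) ∉ (bdyDisjPt k).faces := by
  rw [mem_bdyDisjPt, not_or]
  refine ⟨fun h => h.2 (subset_univ _), fun h => ?_⟩
  have h0 : (0 : Fin (k + 2)) ∈ ({Fin.last (k + 1)} : Finset _) := h ▸ mem_univ _
  simp [Fin.ext_iff] at h0

end SComplex

/-- If `C` is a β-avoiding simplicial complex, then so is its Alexander dual `C*`. -/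
theorem betaAvoiding_dual {V : Type} [DecidableEq V] [Fintype V] (C : SComplex V)
    (hC : SComplex.BetaAvoiding C) : SComplex.BetaAvoiding (SComplex.dual C) := by
  open SComplex in
  obtain ⟨hP4, hO6, hO6', hJ1, hJ1', hJ2, hbdy⟩ := hC
  exact ⟨not_isMinor_dual ⟨univ, by decide⟩ P4_isomorphic_dual hP4,
    not_isMinor_dual ⟨univ, by decide⟩ (.refl _) hO6',
    not_isMinor_dual ⟨univ, by decide⟩ (isomorphic_dual_dual _) hO6,
    not_isMinor_dual ⟨univ, by decide⟩ (.refl _) hJ1',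
    not_isMinor_dual ⟨univ, by decide⟩ (isomorphic_dual_dual _) hJ1,
    not_isMinor_dual ⟨univ, by decide⟩ J2_isomorphic_dual hJ2,
    fun k hk => not_isMinor_dual ⟨univ, univ_notMem_bdyDisjPt k⟩
      ((bdyDisjPt_dual k).symm ▸ .refl _) (hbdy k hk)⟩
end

section
/- Let H be a finite connected simple graph that contains no three pairwise adjacent vertices (no K_3 subgraph) and no induced path on four vertices (no induced P_4). Then H is a complete bipartite graph: its vertex set can be partitioned into two parts such that two vertices are adjacent if and only if they lie in different parts. -/
open Finset

/-! Fix a vertex `x`. Every vertex is either a neighbour of `x` or adjacent to all neighbours of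
`x`: this holds at `x`, and it propagates along each edge `y v`, since otherwise a neighbour `a`
of `x` would give an induced path `v y x a` or `v y a x`, or a triangle. Hence the neighbourhood
of `x` and its complement are the two sides of a complete bipartition; a triangle rules out
edges inside either side. -/

namespace SimpleGraph

variable {V : Type*} {H : SimpleGraph V}

def InducedP4Free (H : SimpleGraph V) : Prop :=
  ¬ ∃ a b c d : V, a ≠ b ∧ a ≠ c ∧ a ≠ d ∧ b ≠ c ∧ b ≠ d ∧ c ≠ d ∧
    H.Adj a b ∧ H.Adj b c ∧ H.Adj c d ∧ ¬ H.Adj a c ∧ ¬ H.Adj a d ∧ ¬ H.Adj b d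

theorem InducedP4Free.adj_of_adj_adj_adj (hP4 : H.InducedP4Free) {a b c d : V}
    (hab : H.Adj a b) (hbc : H.Adj b c) (hcd : H.Adj c d) (hac : ¬ H.Adj a c)
    (hbd : ¬ H.Adj b d) : H.Adj a d := by
  by_contra had
  refine hP4 ⟨a, b, c, d, hab.ne, ?_, ?_, hbc.ne, ?_, hcd.ne, hab, hbc, hcd, hac, had, hbd⟩
  · rintro rfl
    exact had hcd
  · rintro rfl
    exact hac hcd.symm
  · rintro rfl
    exact had hab

theorem adj_or_neighborSet_subset_of_adj
    (hK3 : ∀ a b c : V, ¬(H.Adj a b ∧ H.Adj b c ∧ H.Adj a c)) (hP4 : H.InducedP4Free)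
    {x y v : V} (hy : H.Adj x y ∨ H.neighborSet x ⊆ H.neighborSet y) (hyv : H.Adj y v) :
    H.Adj x v ∨ H.neighborSet x ⊆ H.neighborSet v := by
  refine or_iff_not_imp_left.mpr fun hxv a hxa => by_contra fun hva => ?_
  rcases hy with hxy | hNy
  · exact hva (hP4.adj_of_adj_adj_adj hyv.symm hxy.symm hxa (mt Adj.symm hxv)
      fun hya => hK3 x y a ⟨hxy, hya, hxa⟩)
  · have hya : H.Adj y a := hNy hxa
    exact hxv (hP4.adj_of_adj_adj_adj hyv.symm hya hxa.symm hva
      fun hyx => hK3 x y a ⟨hyx.symm, hya, hxa⟩).symm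

theorem adj_or_neighborSet_subset (hconn : H.Preconnected)
    (hK3 : ∀ a b c : V, ¬(H.Adj a b ∧ H.Adj b c ∧ H.Adj a c)) (hP4 : H.InducedP4Free)
    (x v : V) : H.Adj x v ∨ H.neighborSet x ⊆ H.neighborSet v := by
  induction (H.reachable_iff_reflTransGen x v).mp (hconn x v) with
  | refl => exact Or.inr subset_rfl
  | tail _ hyv ih => exact adj_or_neighborSet_subset_of_adj hK3 hP4 ih hyv

theorem adj_iff_not_adj_iff_adj (hconn : H.Preconnected)
    (hK3 : ∀ a b c : V, ¬(H.Adj a b ∧ H.Adj b c ∧ H.Adj a c)) (hP4 : H.InducedP4Free)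
    (x u v : V) : H.Adj u v ↔ ¬(H.Adj x u ↔ H.Adj x v) := by
  have hN := adj_or_neighborSet_subset hconn hK3 hP4 x
  constructor
  · intro huv hxuv
    by_cases hxu : H.Adj x u
    · exact hK3 x u v ⟨hxu, huv, hxuv.mp hxu⟩
    · have hxv : ¬ H.Adj x v := mt hxuv.mpr hxu
      have : Nontrivial V := ⟨⟨u, v, huv.ne⟩⟩
      obtain ⟨a, hxa⟩ := hconn.exists_adj_of_nontrivial x
      exact hK3 u v a ⟨huv, (hN v).resolve_left hxv hxa, (hN u).resolve_left hxu hxa⟩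
  · intro hxuv
    by_cases hxu : H.Adj x u
    · have hxv : ¬ H.Adj x v := fun hxv => hxuv (iff_of_true hxu hxv)
      exact ((hN v).resolve_left hxv hxu).symm
    · have hxv : H.Adj x v := not_not.mp fun hxv => hxuv (iff_of_false hxu hxv)
      exact (hN u).resolve_left hxu hxv

end SimpleGraph

theorem connected_K3_free_P4_free_is_complete_bipartite_general {V : Type}
    (H : SimpleGraph V) (hconn : H.Connected)
    (hK3 : ∀ a b c : V, ¬(H.Adj a b ∧ H.Adj b c ∧ H.Adj a c))
    (hP4 : ¬ ∃ a b c d : V, a ≠ b ∧ a ≠ c ∧ a ≠ d ∧ b ≠ c ∧ b ≠ d ∧ c ≠ d ∧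
      H.Adj a b ∧ H.Adj b c ∧ H.Adj c d ∧ ¬ H.Adj a c ∧ ¬ H.Adj a d ∧ ¬ H.Adj b d) :
    ∃ A : Set V, ∀ u v : V, H.Adj u v ↔ ¬(u ∈ A ↔ v ∈ A) := by
  obtain ⟨x⟩ := hconn.nonempty
  exact ⟨H.neighborSet x, H.adj_iff_not_adj_iff_adj hconn.preconnected hK3 hP4 x⟩

/-- A finite connected simple graph with no triangle and no induced path on four vertices
is complete bipartite: there is a set `A` of vertices such that two vertices are adjacent
iff exactly one of them lies in `A`. -/
theorem connected_K3_free_P4_free_is_complete_bipartite {V : Type} [Fintype V]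
    (H : SimpleGraph V) (hconn : H.Connected)
    (hK3 : ∀ a b c : V, ¬(H.Adj a b ∧ H.Adj b c ∧ H.Adj a c))
    (hP4 : ¬ ∃ a b c d : V, a ≠ b ∧ a ≠ c ∧ a ≠ d ∧ b ≠ c ∧ b ≠ d ∧ c ≠ d ∧
      H.Adj a b ∧ H.Adj b c ∧ H.Adj c d ∧ ¬ H.Adj a c ∧ ¬ H.Adj a d ∧ ¬ H.Adj b d) :
    ∃ A : Set V, ∀ u v : V, H.Adj u v ↔ ¬(u ∈ A ↔ v ∈ A) :=
  connected_K3_free_P4_free_is_complete_bipartite_general H hconn hK3 hP4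
end
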